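/- If n = 2 or k = 2, then every extreme point of the truthful polytope T(σ) induced by any family of value functions v is integral, i.e., all its coordinates lie in {0,1}. -/

import Mathlib

/-!
A point `y ∈ T(σ)` with a fractional coordinate is not extreme as soon as there is a nonzero
direction `d`, supported on the fractional coordinates, with zero column sums and constant along
every tight monotonicity constraint: then `y ± t • d ∈ T(σ)` for small `t`.

For two agents, shift mass from agent `0` to agent `1` on all profiles where agent `0` holds
exactly the fractional share `y 0 s`. For two signals, take `d` constant on each edge
`{(0, s₋ᵢ), (1, s₋ᵢ)}` of the cube `{0,1}ⁿ` in the direction of agent `i`. The zero column sums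
form a linear system with one unknown per edge meeting a fractional coordinate and one equation
per profile with a fractional coordinate. Such a profile has at least two fractional coordinates
and an edge carries at most two, so there are at least as many unknowns as equations; in case of
equality every edge carries two fractional coordinates, and since the cube is bipartite the
parity-weighted sum of the equations vanishes. Either way the system has a nonzero solution.
-/

namespace Stmt7

variable {n k : ℕ}

/-- Membership in the truthful polytope `T(σ)` for the orderings induced by `v`. -/
def InT (v x : Fin n → (Fin n → Fin k) → ℝ) : Prop :=
  (∀ i s, 0 ≤ x i s ∧ x i s ≤ 1) ∧ (∀ s, ∑ i, x i s = 1) ∧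
  (∀ (i : Fin n) (s : Fin n → Fin k) (a b : Fin k),
    v i (Function.update s i a) < v i (Function.update s i b) →
    x i (Function.update s i a) ≤ x i (Function.update s i b))

open Function Finset Filter Topology Module

theorem notMem_extremePoints_of_eventually_add_smul_mem {E : Type*} [AddCommGroup E]
    [Module ℝ E] {A : Set E} {x u : E} (hu : u ≠ 0)
    (h : ∀ᶠ t in 𝓝 (0 : ℝ), x + t • u ∈ A) : x ∉ A.extremePoints ℝ := by
  intro hx
  obtain ⟨ε, hε, hball⟩ := Metric.eventually_nhds_iff.1 h
  have hmem : ∀ t : ℝ, |t| < ε → x + t • u ∈ A := fun t ht => hball (by simpa using ht)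
  have ht : |ε / 2| < ε := by rw [abs_of_pos (by positivity)]; linarith
  have hsub : x - (ε / 2) • u ∈ A := by
    simpa [sub_eq_add_neg] using hmem (-(ε / 2)) (by rwa [abs_neg])
  have heq := hx.2 hsub (hmem _ ht) (mem_openSegment_sub_add x ((ε / 2) • u))
  have hzero : (ε / 2) • u = 0 := by simpa using heq
  exact hu ((smul_eq_zero.1 hzero).resolve_left (by positivity))

theorem exists_ne_and_ne_zero_and_ne_one {ι : Type*} [Fintype ι] {f : ι → ℝ}
    (hf : ∀ j, 0 ≤ f j) (hsum : ∑ j, f j = 1) {i : ι} (hi : f i ≠ 0 ∧ f i ≠ 1) :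
    ∃ j ≠ i, f j ≠ 0 ∧ f j ≠ 1 := by
  classical
  by_contra! h
  have hrest : f i + ∑ j ∈ univ.erase i, f j = 1 := by rw [add_sum_erase _ _ (mem_univ i), hsum]
  by_cases hone : ∃ j ≠ i, f j = 1
  · obtain ⟨j, hji, hj⟩ := hone
    have := single_le_sum (fun j _ => hf j) (mem_erase.2 ⟨hji, mem_univ j⟩)
    exact hi.1 (le_antisymm (by linarith) (hf i))
  · have hzero : ∑ j ∈ univ.erase i, f j = 0 := sum_eq_zero fun j hj =>
      by_contra fun h0 => hone ⟨j, ne_of_mem_erase hj, h j (ne_of_mem_erase hj) h0⟩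
    exact hi.2 (by linarith)

structure IsFeasibleDirection (v y d : Fin n → (Fin n → Fin k) → ℝ) : Prop where
  ne_zero_and_ne_one : ∀ i s, d i s ≠ 0 → y i s ≠ 0 ∧ y i s ≠ 1
  sum_eq_zero : ∀ s, ∑ i, d i s = 0
  eq_of_tight : ∀ i s a b, v i (update s i a) < v i (update s i b) →
    y i (update s i a) = y i (update s i b) → d i (update s i a) = d i (update s i b)

theorem IsFeasibleDirection.eventually_inT {v y d : Fin n → (Fin n → Fin k) → ℝ}
    (hd : IsFeasibleDirection v y d) (hy : InT v y) :
    ∀ᶠ t in 𝓝 (0 : ℝ), InT v (y + t • d) := by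
  obtain ⟨hbd, hone, hmono⟩ := hy
  have hlim : ∀ i s, Tendsto (fun t : ℝ => (y + t • d) i s) (𝓝 0) (𝓝 (y i s)) := fun i s => by
    simpa using (continuous_const.add (continuous_id.mul continuous_const)).tendsto (0 : ℝ)
      (f := fun t : ℝ => y i s + t * d i s)
  have hbd' : ∀ i s, ∀ᶠ t in 𝓝 (0 : ℝ), 0 ≤ (y + t • d) i s ∧ (y + t • d) i s ≤ 1 := by
    intro i s
    by_cases hds : d i s = 0
    · exact .of_forall fun t => by simpa [hds] using hbd i s
    · obtain ⟨h0, h1⟩ := hd.ne_zero_and_ne_one i s hds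
      have hIoo : Set.Ioo (0 : ℝ) 1 ∈ 𝓝 (y i s) :=
        Ioo_mem_nhds ((hbd i s).1.lt_of_ne' h0) ((hbd i s).2.lt_of_ne h1)
      exact ((hlim i s).eventually hIoo).mono fun t ht => ⟨ht.1.le, ht.2.le⟩
  have hmono' : ∀ i s a b, v i (update s i a) < v i (update s i b) → ∀ᶠ t in 𝓝 (0 : ℝ),
      (y + t • d) i (update s i a) ≤ (y + t • d) i (update s i b) := by
    intro i s a b hv
    rcases (hmono i s a b hv).lt_or_eq with hlt | heq
    · exact ((hlim _ _).eventually_lt (hlim _ _) hlt).mono fun t ht => ht.le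
    · exact .of_forall fun t => by simp [heq, hd.eq_of_tight i s a b hv heq]
  filter_upwards [eventually_all.2 fun i => eventually_all.2 (hbd' i),
    eventually_all.2 fun i => eventually_all.2 fun s => eventually_all.2 fun a =>
      eventually_all.2 fun b => eventually_imp_distrib_left.2 (hmono' i s a b)] with t h1 h3
  refine ⟨h1, fun s => ?_, h3⟩
  simp [sum_add_distrib, ← mul_sum, hd.sum_eq_zero, hone]

theorem IsFeasibleDirection.notMem_extremePoints {v y d : Fin n → (Fin n → Fin k) → ℝ}
    (hd : IsFeasibleDirection v y d) (hy : InT v y) (hd0 : d ≠ 0) :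
    y ∉ Set.extremePoints ℝ {x | InT v x} :=
  notMem_extremePoints_of_eventually_add_smul_mem hd0 (hd.eventually_inT hy)

theorem eq_zero_or_eq_one_of_mem_extremePoints_of_two_agents
    {v y : Fin 2 → (Fin 2 → Fin k) → ℝ} (hy : y ∈ Set.extremePoints ℝ {x | InT v x})
    (i : Fin 2) (s : Fin 2 → Fin k) : y i s = 0 ∨ y i s = 1 := by
  by_contra! hfrac
  have hcompl : ∀ u, y 1 u = 1 - y 0 u := fun u => by
    have := hy.1.2.1 u
    rw [Fin.sum_univ_two] at this
    linarith
  have h0 : y 0 s ≠ 0 ∧ y 0 s ≠ 1 := by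
    match i with
    | 0 => exact hfrac
    | 1 =>
      rw [hcompl] at hfrac
      exact ⟨fun h => hfrac.2 (by simp [h]), fun h => hfrac.1 (by simp [h])⟩
  let d : Fin 2 → (Fin 2 → Fin k) → ℝ := fun j u => if y 0 u = y 0 s then ![1, -1] j else 0
  refine IsFeasibleDirection.notMem_extremePoints (d := d) ⟨?_, ?_, ?_⟩ hy.1 ?_ hy
  · intro j u hdu
    have hu : y 0 u = y 0 s := by_contra fun h => hdu (if_neg h)
    match j with
    | 0 => simpa [hu] using h0
    | 1 =>
      simp only [hcompl, hu]
      exact ⟨fun h => h0.2 (by linarith), fun h => h0.1 (by linarith)⟩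
  · intro u
    by_cases hu : y 0 u = y 0 s <;> simp [d, hu]
  · intro j u a b _ hab
    have h0ab : y 0 (update u j a) = y 0 (update u j b) := by
      match j with
      | 0 => exact hab
      | 1 =>
        rw [hcompl, hcompl] at hab
        linarith
    simp only [d, h0ab]
  · intro h
    simpa [d] using congrFun (congrFun h 0) s

def flipSignal (c : Fin n × (Fin n → Fin 2)) : Fin n × (Fin n → Fin 2) :=
  (c.1, update c.2 c.1 (c.2 c.1).rev)

/-- The cube edge through `c` in the direction of agent `c.1`, represented by its endpoint where
that agent has signal `0`. -/
def edge (c : Fin n × (Fin n → Fin 2)) : Fin n × (Fin n → Fin 2) :=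
  (c.1, update c.2 c.1 0)

noncomputable def parity (s : Fin n → Fin 2) : ℝ :=
  (-1) ^ ∑ j, (s j : ℕ)

theorem flipSignal_involutive : Involutive (flipSignal (n := n)) := by
  rintro ⟨i, s⟩
  simp [flipSignal]

theorem flipSignal_ne (c : Fin n × (Fin n → Fin 2)) : flipSignal c ≠ c := by
  intro h
  have := congrFun (congrArg Prod.snd h) c.1
  revert this
  simp only [flipSignal, update_self]
  generalize c.2 c.1 = b
  revert b
  decide

theorem flipSignal_mk_update {i : Fin n} {s : Fin n → Fin 2} {a b : Fin 2} (hab : a ≠ b) :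
    flipSignal (i, update s i a) = (i, update s i b) := by
  have : a.rev = b := by revert a b; decide
  simp [flipSignal, this]

theorem edge_flipSignal (c : Fin n × (Fin n → Fin 2)) : edge (flipSignal c) = edge c := by
  simp [edge, flipSignal]

theorem eq_or_eq_flipSignal_of_edge_eq {c c' : Fin n × (Fin n → Fin 2)} (h : edge c' = edge c) :
    c' = c ∨ c' = flipSignal c := by
  obtain ⟨i, s⟩ := c
  obtain ⟨i', s'⟩ := c'
  obtain ⟨rfl, hs⟩ := Prod.mk.inj h
  have hs' : s' = update s i' (s' i') := by
    funext j
    by_cases hj : j = i'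
    · subst hj
      simp
    · simpa [update_of_ne hj] using congrFun hs j
  have hbit : s' i' = s i' ∨ s' i' = (s i').rev := by
    generalize s' i' = a, s i' = b
    revert a b
    decide
  rcases hbit with hbit | hbit
  · left
    rw [hs', hbit, update_eq_self]
  · right
    rw [flipSignal, ← hbit, ← hs']

theorem parity_update (s : Fin n → Fin 2) (i : Fin n) (b : Fin 2) :
    parity (update s i b) = (-1) ^ (b : ℕ) * (-1) ^ ∑ j ∈ {i}ᶜ, (s j : ℕ) := by
  rw [parity, Fintype.sum_eq_add_sum_compl i, pow_add, update_self]
  congr 2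
  exact sum_congr rfl fun j hj => by rw [update_of_ne (by simpa using hj)]

theorem parity_flipSignal (c : Fin n × (Fin n → Fin 2)) :
    parity (flipSignal c).2 = -parity c.2 := by
  obtain ⟨i, s⟩ := c
  conv_rhs => rw [← update_eq_self i s]
  simp only [flipSignal, parity_update]
  generalize s i = b
  fin_cases b <;> simp

theorem two_mul_card_image_snd_le {ι β : Type*} [DecidableEq ι] [DecidableEq β]
    {C : Finset (ι × β)} (hC : ∀ c ∈ C, ∃ j ≠ c.1, (j, c.2) ∈ C) :
    2 * #(C.image Prod.snd) ≤ #C := by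
  refine mul_card_image_le_card C 2 fun s hs => ?_
  obtain ⟨c, hc, rfl⟩ := mem_image.1 hs
  obtain ⟨j, hj, hjc⟩ := hC c hc
  exact one_lt_card.2
    ⟨c, by simp [hc], (j, c.2), by simp [hjc], fun h => hj (congrArg Prod.fst h).symm⟩

theorem filter_edge_eq_subset (C : Finset (Fin n × (Fin n → Fin 2)))
    (c : Fin n × (Fin n → Fin 2)) :
    {c' ∈ C | edge c' = edge c} ⊆ {c, flipSignal c} := fun c' hc' => by
  rcases eq_or_eq_flipSignal_of_edge_eq (mem_filter.1 hc').2 with h | h <;> simp [h]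

theorem card_filter_edge_eq_le_two (C : Finset (Fin n × (Fin n → Fin 2)))
    {r : Fin n × (Fin n → Fin 2)} (hr : r ∈ C.image edge) : #{c ∈ C | edge c = r} ≤ 2 := by
  obtain ⟨c, -, rfl⟩ := mem_image.1 hr
  exact (card_le_card (filter_edge_eq_subset C c)).trans card_le_two

theorem card_le_two_mul_card_image_edge (C : Finset (Fin n × (Fin n → Fin 2))) :
    #C ≤ 2 * #(C.image edge) :=
  card_le_mul_card_image C 2 fun _ => card_filter_edge_eq_le_two C

theorem card_lt_two_mul_card_image_edge {C : Finset (Fin n × (Fin n → Fin 2))}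
    (h : ∃ c ∈ C, flipSignal c ∉ C) : #C < 2 * #(C.image edge) := by
  obtain ⟨c, hc, hflip⟩ := h
  have hfiber : #{c' ∈ C | edge c' = edge c} < 2 := by
    refine (card_le_card (t := {c}) fun c' hc' => ?_).trans_lt (by simp)
    rcases mem_insert.1 (filter_edge_eq_subset C c hc') with rfl | h
    · exact mem_singleton_self c'
    · exact absurd (mem_singleton.1 h ▸ (mem_filter.1 hc').1) hflip
  calc #C = ∑ r ∈ C.image edge, #{c' ∈ C | edge c' = r} := card_eq_sum_card_image edge C
    _ < ∑ _r ∈ C.image edge, 2 :=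
      sum_lt_sum (fun _ => card_filter_edge_eq_le_two C) ⟨edge c, mem_image_of_mem _ hc, hfiber⟩
    _ = 2 * #(C.image edge) := by simp [mul_comm]

theorem ker_ne_bot_of_range_le_of_finrank_lt {K V W : Type*} [Field K] [AddCommGroup V]
    [Module K V] [FiniteDimensional K V] [AddCommGroup W] [Module K W] [FiniteDimensional K W]
    (f : V →ₗ[K] W) {U : Submodule K W} (hU : LinearMap.range f ≤ U)
    (h : finrank K U < finrank K V) : LinearMap.ker f ≠ ⊥ := by
  have := LinearMap.ker_ne_bot_of_finrank_lt
    (f := f.codRestrict U fun x => hU (LinearMap.mem_range_self f x)) h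
  rwa [LinearMap.ker_codRestrict] at this

noncomputable def columnSums {ι β : Type*} [Fintype ι] (F : Finset β) :
    (ι × β → ℝ) →ₗ[ℝ] (F → ℝ) :=
  LinearMap.pi fun s => ∑ i, LinearMap.proj (i, s.1)

noncomputable def paritySum (F : Finset (Fin n → Fin 2)) : (F → ℝ) →ₗ[ℝ] ℝ :=
  ∑ s : F, parity s.1 • LinearMap.proj s

noncomputable def edgeLift (C : Finset (Fin n × (Fin n → Fin 2))) :
    (C.image edge → ℝ) →ₗ[ℝ] (Fin n × (Fin n → Fin 2) → ℝ) :=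
  LinearMap.pi fun c => if h : c ∈ C then LinearMap.proj ⟨edge c, mem_image_of_mem edge h⟩ else 0

theorem columnSums_apply {ι β : Type*} [Fintype ι] (F : Finset β) (d : ι × β → ℝ) (s : F) :
    columnSums F d s = ∑ i, d (i, s.1) := by
  simp [columnSums]

theorem paritySum_apply (F : Finset (Fin n → Fin 2)) (f : F → ℝ) :
    paritySum F f = ∑ s, parity s.1 * f s := by
  simp [paritySum]

theorem paritySum_ne_zero {F : Finset (Fin n → Fin 2)} (hF : F.Nonempty) : paritySum F ≠ 0 := by
  obtain ⟨s, hs⟩ := hF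
  intro h
  have := LinearMap.congr_fun h (Pi.single ⟨s, hs⟩ 1)
  rw [paritySum_apply, Fintype.sum_eq_single ⟨s, hs⟩ fun s' hs' => by simp [hs']] at this
  simp [parity] at this

theorem paritySum_columnSums {F : Finset (Fin n → Fin 2)} {d : Fin n × (Fin n → Fin 2) → ℝ}
    (hd : ∀ c, c.2 ∉ F → d c = 0) :
    paritySum F (columnSums F d) = ∑ c, parity c.2 * d c := by
  rw [paritySum_apply, Fintype.sum_prod_type_right]
  simp only [columnSums_apply, ← mul_sum]
  refine (sum_coe_sort F fun s => parity s * ∑ i, d (i, s)).trans (sum_subset (subset_univ F) ?_)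
  intro s _ hs
  simp [hd (_, s) hs]

theorem sum_parity_mul_eq_zero {d : Fin n × (Fin n → Fin 2) → ℝ}
    (hd : ∀ c, d (flipSignal c) = d c) : ∑ c, parity c.2 * d c = 0 :=
  sum_ninvolution flipSignal (fun c => by rw [parity_flipSignal, hd]; ring)
    (fun c _ => flipSignal_ne c) (fun _ => mem_univ _) flipSignal_involutive

section edgeLift

variable {C : Finset (Fin n × (Fin n → Fin 2))} {e : C.image edge → ℝ}
  {c : Fin n × (Fin n → Fin 2)}

theorem edgeLift_apply_of_mem (hc : c ∈ C) :
    edgeLift C e c = e ⟨edge c, mem_image_of_mem edge hc⟩ := by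
  simp [edgeLift, hc]

theorem edgeLift_apply_of_notMem (hc : c ∉ C) : edgeLift C e c = 0 := by
  simp [edgeLift, hc]

theorem edgeLift_injective : Injective (edgeLift C) := by
  intro e e' h
  funext ⟨r, hr⟩
  obtain ⟨c, hc, rfl⟩ := mem_image.1 hr
  simpa [edgeLift_apply_of_mem hc] using congrFun h c

theorem edgeLift_flipSignal (h : flipSignal c ∈ C ↔ c ∈ C) :
    edgeLift C e (flipSignal c) = edgeLift C e c := by
  by_cases hc : c ∈ C
  · rw [edgeLift_apply_of_mem hc, edgeLift_apply_of_mem (h.2 hc)]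
    exact congrArg e (Subtype.ext (edge_flipSignal c))
  · rw [edgeLift_apply_of_notMem hc, edgeLift_apply_of_notMem (mt h.1 hc)]

end edgeLift

theorem exists_ne_zero_columnSums_edgeLift_eq_zero {C : Finset (Fin n × (Fin n → Fin 2))}
    (hne : C.Nonempty) (hC : ∀ c ∈ C, ∃ j ≠ c.1, (j, c.2) ∈ C) :
    ∃ e ≠ 0, columnSums (C.image Prod.snd) (edgeLift C e) = 0 := by
  suffices ∃ U : Submodule ℝ (C.image Prod.snd → ℝ),
      LinearMap.range ((columnSums _).comp (edgeLift C)) ≤ U ∧ finrank ℝ U < #(C.image edge) by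
    obtain ⟨U, hU, hlt⟩ := this
    have hker := ker_ne_bot_of_range_le_of_finrank_lt _ hU
      (by rwa [finrank_fintype_fun_eq_card, Fintype.card_coe])
    obtain ⟨e, he, he0⟩ := (Submodule.ne_bot_iff _).1 hker
    exact ⟨e, he0, he⟩
  have hF := two_mul_card_image_snd_le hC
  by_cases hclosed : ∀ c ∈ C, flipSignal c ∈ C
  · refine ⟨LinearMap.ker (paritySum _), ?_, ?_⟩
    · rintro _ ⟨e, rfl⟩
      have hflip : ∀ c, flipSignal c ∈ C ↔ c ∈ C := fun c =>
        ⟨fun h => flipSignal_involutive c ▸ hclosed _ h, hclosed c⟩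
      rw [LinearMap.mem_ker, LinearMap.comp_apply, paritySum_columnSums, sum_parity_mul_eq_zero]
      · exact fun c => edgeLift_flipSignal (hflip c)
      · exact fun c hc => edgeLift_apply_of_notMem fun h => hc (mem_image_of_mem _ h)
    · have := Submodule.finrank_lt
        (LinearMap.ker_eq_top.not.2 (paritySum_ne_zero (hne.image Prod.snd)))
      have := card_le_two_mul_card_image_edge C
      simp only [finrank_fintype_fun_eq_card, Fintype.card_coe] at *
      omega
  · refine ⟨⊤, le_top, ?_⟩
    have := card_lt_two_mul_card_image_edge (by simpa using hclosed)
    simp only [finrank_top, finrank_fintype_fun_eq_card, Fintype.card_coe]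
    omega

open scoped Classical in
theorem eq_zero_or_eq_one_of_mem_extremePoints_of_two_signals
    {v y : Fin n → (Fin n → Fin 2) → ℝ} (hy : y ∈ Set.extremePoints ℝ {x | InT v x})
    (i : Fin n) (s : Fin n → Fin 2) : y i s = 0 ∨ y i s = 1 := by
  by_contra! hfrac
  set C : Finset (Fin n × (Fin n → Fin 2)) := {c | y c.1 c.2 ≠ 0 ∧ y c.1 c.2 ≠ 1}
  have hmemC : ∀ c, c ∈ C ↔ y c.1 c.2 ≠ 0 ∧ y c.1 c.2 ≠ 1 := by simp [C]
  have hC : ∀ c ∈ C, ∃ j ≠ c.1, (j, c.2) ∈ C := fun c hc => by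
    simpa only [hmemC] using exists_ne_and_ne_zero_and_ne_one (fun j => (hy.1.1 j c.2).1)
      (hy.1.2.1 c.2) ((hmemC c).1 hc)
  obtain ⟨e, he0, he⟩ :=
    exists_ne_zero_columnSums_edgeLift_eq_zero ⟨(i, s), (hmemC _).2 hfrac⟩ hC
  refine IsFeasibleDirection.notMem_extremePoints (d := curry (edgeLift C e))
    ⟨?_, ?_, ?_⟩ hy.1 ?_ hy
  · intro j u hd
    exact (hmemC (j, u)).1 (by_contra fun h => hd (edgeLift_apply_of_notMem h))
  · intro u
    by_cases hu : u ∈ C.image Prod.snd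
    · simpa [columnSums_apply] using congrFun he ⟨u, hu⟩
    · refine sum_eq_zero fun j _ => edgeLift_apply_of_notMem fun h => hu ?_
      exact mem_image_of_mem Prod.snd h
  · intro j u a b _ hab
    by_cases hba : b = a
    · rw [hba]
    have hflip := flipSignal_mk_update (i := j) (s := u) (Ne.symm hba)
    have hiff : flipSignal (j, update u j a) ∈ C ↔ (j, update u j a) ∈ C := by
      rw [hflip, hmemC, hmemC, ← hab]
    simpa only [curry_apply, hflip] using (edgeLift_flipSignal hiff).symm
  · intro h
    refine he0 (edgeLift_injective ?_)
    ext c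
    simpa using congrFun (congrFun h c.1) c.2

theorem stmt7 (n k : ℕ) (hnk : n = 2 ∨ k = 2)
    (v : Fin n → (Fin n → Fin k) → ℝ) :
    ∀ y ∈ Set.extremePoints ℝ {x : Fin n → (Fin n → Fin k) → ℝ | InT v x},
      ∀ i s, y i s = 0 ∨ y i s = 1 := by
  rcases hnk with rfl | rfl
  · exact fun y hy => eq_zero_or_eq_one_of_mem_extremePoints_of_two_agents hy
  · exact fun y hy => eq_zero_or_eq_one_of_mem_extremePoints_of_two_signals hy

end Stmt7
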